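/- BV-convergence theorem for the Kurzweil–Stieltjes integral: let g : [a,b] → ℝ be bounded, and let f_n : [a,b] → ℝ be such that (K)∫_a^b f_n dg exists for every n and ‖f_n − f‖_BV := |f_n(a) − f(a)| + var_a^b(f_n − f) → 0. Then (K)∫_a^b f dg exists and lim_{n→∞} (K)∫_a^b f_n dg = (K)∫_a^b f dg. -/

import Mathlib

open Set Filter

/-- A tagged partition of `[a,b]`: points `a = pts 0 < pts 1 < … < pts n = b`
with tags `tag j ∈ [pts j, pts (j+1)]`. -/
structure TaggedPartition (a b : ℝ) where
  n : ℕ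
  pts : ℕ → ℝ
  tag : ℕ → ℝ
  n_pos : 0 < n
  pts_zero : pts 0 = a
  pts_last : pts n = b
  pts_mono : ∀ j < n, pts j < pts (j + 1)
  tag_mem : ∀ j < n, tag j ∈ Set.Icc (pts j) (pts (j + 1))

/-- Riemann–Stieltjes sum `S(f, dg, P)`. -/
def RS (f g : ℝ → ℝ) {a b : ℝ} (P : TaggedPartition a b) : ℝ :=
  ∑ j ∈ Finset.range P.n, f (P.tag j) * (g (P.pts (j + 1)) - g (P.pts j))

/-- `P` is `δ`-fine. -/
def IsFine (δ : ℝ → ℝ) {a b : ℝ} (P : TaggedPartition a b) : Prop :=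
  ∀ j < P.n, Set.Icc (P.pts j) (P.pts (j + 1)) ⊆
    Set.Icc (P.tag j - δ (P.tag j)) (P.tag j + δ (P.tag j))

/-- The Kurzweil–Stieltjes integral `(K)∫_a^b f dg` exists and equals `I`. -/
def HasKS (f g : ℝ → ℝ) (a b I : ℝ) : Prop :=
  ∀ ε > 0, ∃ δ : ℝ → ℝ, (∀ t ∈ Set.Icc a b, 0 < δ t ∧ δ t < 1) ∧
    ∀ P : TaggedPartition a b, IsFine δ P → |RS f g P - I| < ε

/-- The division of `P` contains all points of the finite set `D`. -/
def Refines {a b : ℝ} (P : TaggedPartition a b) (D : Finset ℝ) : Prop :=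
  ∀ x ∈ D, ∃ j ≤ P.n, P.pts j = x

/-- All tags of `P` lie strictly inside the corresponding subintervals. -/
def InteriorTags {a b : ℝ} (P : TaggedPartition a b) : Prop :=
  ∀ j < P.n, P.pts j < P.tag j ∧ P.tag j < P.pts (j + 1)

/-- The Dushnik integral `(D)∫_a^b f dg` exists and equals `I`. -/
def HasDushnik (f g : ℝ → ℝ) (a b I : ℝ) : Prop :=
  ∀ ε > 0, ∃ D : Finset ℝ, ↑D ⊆ Set.Icc a b ∧
    ∀ P : TaggedPartition a b, Refines P D → InteriorTags P → |RS f g P - I| < ε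

/-- `f` is regulated on `[a,b]`: it has finite one-sided limits (within `[a,b]`)
at every point where they make sense. -/
def Regulated (f : ℝ → ℝ) (a b : ℝ) : Prop :=
  (∀ t ∈ Set.Ioc a b, ∃ L : ℝ, Filter.Tendsto f (nhdsWithin t (Set.Ico a t)) (nhds L)) ∧
  (∀ t ∈ Set.Ico a b, ∃ L : ℝ, Filter.Tendsto f (nhdsWithin t (Set.Ioc t b)) (nhds L))

/-- The Young sum `S_Y(f, dg, P)`, where `gl t = g(t-)` and `gr t = g(t+)`
are the one-sided limit functions of `g`. -/
def YS (f gl gr g : ℝ → ℝ) {a b : ℝ} (P : TaggedPartition a b) : ℝ :=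
  ∑ j ∈ Finset.range P.n,
    (f (P.pts j) * (gr (P.pts j) - g (P.pts j))
      + f (P.tag j) * (gl (P.pts (j + 1)) - gr (P.pts j))
      + f (P.pts (j + 1)) * (g (P.pts (j + 1)) - gl (P.pts (j + 1))))

/-- The Young integral `(Y)∫_a^b f dg` exists and equals `I` (here `gl`, `gr`
are the one-sided limit functions of `g`). -/
def HasYoung (f gl gr g : ℝ → ℝ) (a b I : ℝ) : Prop :=
  ∀ ε > 0, ∃ D : Finset ℝ, ↑D ⊆ Set.Icc a b ∧
    ∀ P : TaggedPartition a b, Refines P D → InteriorTags P → |YS f gl gr g P - I| < ε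

/-- `f` is a finite step function on `[a,b]`: constant on the open subintervals
of some division `a = σ 0 < … < σ m = b`. -/
def IsStepFunction (f : ℝ → ℝ) (a b : ℝ) : Prop :=
  ∃ (m : ℕ) (σ : ℕ → ℝ), 0 < m ∧ σ 0 = a ∧ σ m = b ∧ (∀ k < m, σ k < σ (k + 1)) ∧
    ∀ k < m, ∀ x ∈ Set.Ioo (σ k) (σ (k + 1)), ∀ y ∈ Set.Ioo (σ k) (σ (k + 1)), f x = f y

/-- The (real-valued) total variation of `g` on `[a,b]`. -/
noncomputable def var (g : ℝ → ℝ) (a b : ℝ) : ℝ :=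
  (eVariationOn g (Set.Icc a b)).toReal

/-
The estimate behind the theorem is `|S(h, dg, P)| ≤ 4 M ‖h‖_BV` for every tagged partition `P`,
obtained by summation by parts: the increments of `g` telescope to differences of values of `g`
(each at most `2 M`), while the increments of `h` along the tags sum to at most `var h`.
Applied to `h = f_n − f`, it makes the Riemann–Stieltjes sums of `f_n` converge to those of `f`
uniformly in `P`. Comparing two integrals on a common fine partition (Cousin's lemma) shows that
`(I n)` is Cauchy, and its limit is the integral of `f`.
-/

namespace TaggedPartition

variable {a b : ℝ} (P : TaggedPartition a b)

lemma monotoneOn_pts : MonotoneOn P.pts (Iic P.n) :=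
  monotoneOn_of_le_add_one ordConnected_Iic fun j _ _ hj => (P.pts_mono j hj).le

lemma pts_mem_Icc {j : ℕ} (hj : j ≤ P.n) : P.pts j ∈ Icc a b := by
  have h0 : (0 : ℕ) ∈ Iic P.n := Nat.zero_le _
  constructor
  · simpa only [P.pts_zero] using P.monotoneOn_pts h0 hj (Nat.zero_le j)
  · simpa only [P.pts_last] using P.monotoneOn_pts hj (le_refl P.n) hj

lemma monotoneOn_tag : MonotoneOn P.tag (Iio P.n) :=
  monotoneOn_of_le_add_one ordConnected_Iio fun j _ hj hj1 =>
    (P.tag_mem j hj).2.trans (P.tag_mem (j + 1) hj1).1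

lemma tag_mem_Icc {j : ℕ} (hj : j < P.n) : P.tag j ∈ Icc a b :=
  ⟨(P.pts_mem_Icc hj.le).1.trans (P.tag_mem j hj).1,
    (P.tag_mem j hj).2.trans (P.pts_mem_Icc hj).2⟩

def single (a x t : ℝ) (hax : a < x) (ht : t ∈ Icc a x) : TaggedPartition a x where
  n := 1
  pts j := if j = 0 then a else x
  tag _ := t
  n_pos := one_pos
  pts_zero := by simp
  pts_last := by simp
  pts_mono j hj := by obtain rfl : j = 0 := Nat.lt_one_iff.mp hj; simpa using hax
  tag_mem j hj := by obtain rfl : j = 0 := Nat.lt_one_iff.mp hj; simpa using ht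

def extend {x : ℝ} (P : TaggedPartition a x) (y t : ℝ) (hxy : x < y) (ht : t ∈ Icc x y) :
    TaggedPartition a y where
  n := P.n + 1
  pts j := if j ≤ P.n then P.pts j else y
  tag j := if j < P.n then P.tag j else t
  n_pos := Nat.succ_pos _
  pts_zero := by simp [P.pts_zero]
  pts_last := by simp
  pts_mono j hj := by
    rcases Nat.lt_succ_iff_lt_or_eq.mp hj with h | rfl
    · simpa [h.le, Nat.succ_le_of_lt h] using P.pts_mono j h
    · simpa [P.pts_last] using hxy
  tag_mem j hj := by
    rcases Nat.lt_succ_iff_lt_or_eq.mp hj with h | rfl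
    · simpa [h, h.le, Nat.succ_le_of_lt h] using P.tag_mem j h
    · simpa [P.pts_last] using ht

variable {δ : ℝ → ℝ}

lemma isFine_single {x t : ℝ} (hax : a < x) (ht : t ∈ Icc a x)
    (hsub : Icc a x ⊆ Icc (t - δ t) (t + δ t)) : IsFine δ (single a x t hax ht) := by
  intro j hj
  obtain rfl : j = 0 := Nat.lt_one_iff.mp hj
  simpa [single] using hsub

lemma isFine_extend {x y t : ℝ} {P : TaggedPartition a x} (hP : IsFine δ P) (hxy : x < y)
    (ht : t ∈ Icc x y) (hsub : Icc x y ⊆ Icc (t - δ t) (t + δ t)) :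
    IsFine δ (P.extend y t hxy ht) := by
  intro j hj
  rcases Nat.lt_succ_iff_lt_or_eq.mp hj with h | rfl
  · simpa [extend, h, h.le, Nat.succ_le_of_lt h] using hP j h
  · simpa [extend, P.pts_last] using hsub

end TaggedPartition

lemma IsFine.mono {a b : ℝ} {δ δ' : ℝ → ℝ} {P : TaggedPartition a b} (hP : IsFine δ P)
    (hle : ∀ t, δ t ≤ δ' t) : IsFine δ' P := fun j hj =>
  (hP j hj).trans <| Icc_subset_Icc (by linarith [hle (P.tag j)]) (by linarith [hle (P.tag j)])

open TaggedPartition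

/-- **Cousin's lemma**. -/
theorem exists_isFine {a b : ℝ} (hab : a < b) {δ : ℝ → ℝ} (hδ : ∀ t ∈ Icc a b, 0 < δ t) :
    ∃ P : TaggedPartition a b, IsFine δ P := by
  -- With `c` the supremum of the `x ≤ b` for which `[a, x]` has a fine partition, appending one
  -- interval tagged at `c` reaches `[a, c]` from some `x > c - δ c`, and then `[a, c + δ c]`.
  set S : Set ℝ := {x | x ∈ Ioc a b ∧ ∃ P : TaggedPartition a x, IsFine δ P}
  have hδa : 0 < δ a := hδ a ⟨le_rfl, hab.le⟩
  have ha' : a < min b (a + δ a) := lt_min hab (by linarith)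
  have ha'S : min b (a + δ a) ∈ S := ⟨⟨ha', min_le_left _ _⟩, single a _ a ha' ⟨le_rfl, ha'.le⟩,
    isFine_single ha' _ fun z hz => ⟨by linarith [hz.1], hz.2.trans (min_le_right _ _)⟩⟩
  have hbdd : BddAbove S := ⟨b, fun x hx => hx.1.2⟩
  set c := sSup S with hc
  have hac : a < c := ha'.trans_le (le_csSup hbdd ha'S)
  have hcb : c ≤ b := csSup_le ⟨_, ha'S⟩ fun x hx => hx.1.2
  have hδc : 0 < δ c := hδ c ⟨hac.le, hcb⟩
  have hcS : ∃ P : TaggedPartition a c, IsFine δ P := by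
    obtain ⟨x, hxS, hxc⟩ := exists_lt_of_lt_csSup ⟨_, ha'S⟩ (show c - δ c < c by linarith)
    rcases (le_csSup hbdd hxS).eq_or_lt with rfl | hlt
    · exact hxS.2
    · obtain ⟨P, hP⟩ := hxS.2
      exact ⟨P.extend c c hlt ⟨hlt.le, le_rfl⟩, isFine_extend hP hlt _
        fun z hz => ⟨by linarith [hz.1], by linarith [hz.2]⟩⟩
  obtain ⟨P, hP⟩ := hcS
  clear_value c
  rcases hcb.eq_or_lt with rfl | hlt
  · exact ⟨P, hP⟩
  have hc' : c < min b (c + δ c) := lt_min hlt (by linarith)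
  have hc'S : min b (c + δ c) ∈ S := ⟨⟨hac.trans hc', min_le_left _ _⟩,
    P.extend _ c hc' ⟨le_rfl, hc'.le⟩, isFine_extend hP hc' _
      fun z hz => ⟨by linarith [hz.1], hz.2.trans (min_le_right _ _)⟩⟩
  linarith [le_csSup hbdd hc'S, hc]

lemma abs_sub_le_var {h : ℝ → ℝ} {a b x y : ℝ} (hbv : BoundedVariationOn h (Icc a b))
    (hx : x ∈ Icc a b) (hy : y ∈ Icc a b) : |h x - h y| ≤ var h a b := by
  rw [← Real.dist_eq, dist_edist]
  exact ENNReal.toReal_mono hbv (eVariationOn.edist_le h hx hy)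

lemma sum_abs_sub_le_var {h : ℝ → ℝ} {a b : ℝ} (hbv : BoundedVariationOn h (Icc a b))
    {u : ℕ → ℝ} {n : ℕ} (hu : MonotoneOn u (Icc 0 n)) (hmem : ∀ i ∈ Icc 0 n, u i ∈ Icc a b) :
    ∑ i ∈ Finset.range n, |h (u (i + 1)) - h (u i)| ≤ var h a b := by
  have hsum := eVariationOn.sum_le_of_monotoneOn_Icc (f := h) hu hmem
  rw [← Finset.range_eq_Ico] at hsum
  have hne : ∀ i ∈ Finset.range n, edist (h (u (i + 1))) (h (u i)) ≠ ⊤ :=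
    fun _ _ => edist_ne_top _ _
  calc ∑ i ∈ Finset.range n, |h (u (i + 1)) - h (u i)|
      = (∑ i ∈ Finset.range n, edist (h (u (i + 1))) (h (u i))).toReal := by
        simp only [ENNReal.toReal_sum hne, ← dist_edist, Real.dist_eq]
    _ ≤ var h a b := ENNReal.toReal_mono hbv hsum

/-- Summation by parts. -/
lemma abs_sum_mul_sub_le (F G : ℕ → ℝ) (n : ℕ) {K : ℝ} (hG : ∀ k ≤ n, |G k - G 0| ≤ K) :
    |∑ i ∈ Finset.range n, F i * (G (i + 1) - G i)| ≤
      (|F (n - 1)| + ∑ i ∈ Finset.range (n - 1), |F (i + 1) - F i|) * K := by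
  have hpartial : ∀ k, ∑ i ∈ Finset.range k, (G (i + 1) - G i) = G k - G 0 :=
    Finset.sum_range_sub G
  have habel := Finset.sum_range_by_parts F (fun i => G (i + 1) - G i) n
  simp only [smul_eq_mul, hpartial] at habel
  rw [habel, add_mul, Finset.sum_mul]
  refine (abs_sub _ _).trans (add_le_add ?_ ((Finset.abs_sum_le_sum_abs _ _).trans ?_))
  · rw [abs_mul]
    exact mul_le_mul_of_nonneg_left (hG n le_rfl) (abs_nonneg _)
  · refine Finset.sum_le_sum fun i hi => ?_
    rw [abs_mul]
    exact mul_le_mul_of_nonneg_left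
      (hG (i + 1) (by have := Finset.mem_range.mp hi; omega)) (abs_nonneg _)

lemma RS_sub (f₁ f₂ g : ℝ → ℝ) {a b : ℝ} (P : TaggedPartition a b) :
    RS (fun t => f₁ t - f₂ t) g P = RS f₁ g P - RS f₂ g P := by
  simp only [RS, ← Finset.sum_sub_distrib, sub_mul]

lemma abs_RS_le {a b M : ℝ} {g h : ℝ → ℝ} (hg : ∀ t ∈ Icc a b, |g t| ≤ M)
    (hbv : BoundedVariationOn h (Icc a b)) (P : TaggedPartition a b) :
    |RS h g P| ≤ 4 * M * (|h a| + var h a b) := by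
  have ha : a ∈ Icc a b := by simpa only [P.pts_zero] using P.pts_mem_Icc (Nat.zero_le _)
  have hM : 0 ≤ M := (abs_nonneg _).trans (hg a ha)
  have hlast : P.n - 1 < P.n := Nat.sub_lt P.n_pos one_pos
  have hosc : ∀ k ≤ P.n, |g (P.pts k) - g (P.pts 0)| ≤ 2 * M := fun k hk => by
    linarith [abs_sub (g (P.pts k)) (g (P.pts 0)), hg _ (P.pts_mem_Icc hk),
      hg _ (P.pts_mem_Icc (Nat.zero_le P.n))]
  have hF : |h (P.tag (P.n - 1))| ≤ |h a| + var h a b := by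
    linarith [abs_sub_abs_le_abs_sub (h (P.tag (P.n - 1))) (h a),
      abs_sub_le_var hbv (P.tag_mem_Icc hlast) ha]
  have htags : Icc 0 (P.n - 1) ⊆ Iio P.n := fun i hi => by
    have := hi.2; have := P.n_pos; exact Set.mem_Iio.2 (by omega)
  have hdF : ∑ i ∈ Finset.range (P.n - 1), |h (P.tag (i + 1)) - h (P.tag i)| ≤ var h a b :=
    sum_abs_sub_le_var hbv (P.monotoneOn_tag.mono htags) fun i hi => P.tag_mem_Icc (htags hi)
  calc |RS h g P|
      ≤ (|h (P.tag (P.n - 1))| + ∑ i ∈ Finset.range (P.n - 1),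
          |h (P.tag (i + 1)) - h (P.tag i)|) * (2 * M) :=
        abs_sum_mul_sub_le (fun i => h (P.tag i)) (fun i => g (P.pts i)) P.n hosc
    _ ≤ (|h a| + 2 * var h a b) * (2 * M) := by gcongr ?_ * _; linarith
    _ ≤ 4 * M * (|h a| + var h a b) := by nlinarith [mul_nonneg hM (abs_nonneg (h a))]

lemma HasKS.abs_sub_le {a b I₁ I₂ e : ℝ} {f₁ f₂ g : ℝ → ℝ} (hab : a < b)
    (h₁ : HasKS f₁ g a b I₁) (h₂ : HasKS f₂ g a b I₂)
    (hclose : ∀ P : TaggedPartition a b, |RS f₁ g P - RS f₂ g P| ≤ e) : |I₁ - I₂| ≤ e := by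
  refine le_of_forall_pos_lt_add fun ε hε => ?_
  obtain ⟨δ₁, hδ₁, hP₁⟩ := h₁ (ε / 2) (half_pos hε)
  obtain ⟨δ₂, hδ₂, hP₂⟩ := h₂ (ε / 2) (half_pos hε)
  obtain ⟨P, hP⟩ := exists_isFine hab (δ := fun t => min (δ₁ t) (δ₂ t))
    fun t ht => lt_min (hδ₁ t ht).1 (hδ₂ t ht).1
  have e₁ := hP₁ P (hP.mono fun t => min_le_left _ _)
  have e₂ := hP₂ P (hP.mono fun t => min_le_right _ _)
  have e₃ := hclose P
  rw [abs_lt] at e₁ e₂ ⊢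
  rw [abs_le] at e₃
  constructor <;> linarith

theorem exists_hasKS_tendsto_of_uniform {a b : ℝ} (hab : a < b) {g F : ℝ → ℝ}
    {f : ℕ → ℝ → ℝ} {I e : ℕ → ℝ} (hfn : ∀ n, HasKS (f n) g a b (I n))
    (he : Tendsto e atTop (nhds 0))
    (hclose : ∀ n (P : TaggedPartition a b), |RS (f n) g P - RS F g P| ≤ e n) :
    ∃ J, HasKS F g a b J ∧ Tendsto I atTop (nhds J) := by
  have hcauchy : CauchySeq I := by
    refine Metric.cauchySeq_iff'.2 fun ε hε => ?_
    obtain ⟨N, hN⟩ := eventually_atTop.1 (he.eventually (gt_mem_nhds (half_pos hε)))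
    refine ⟨N, fun n hn => (Real.dist_eq _ _).trans_lt ?_⟩
    have := (hfn n).abs_sub_le (e := e n + e N) hab (hfn N) fun P => by
      linarith [abs_sub_le (RS (f n) g P) (RS F g P) (RS (f N) g P), hclose n P,
        abs_sub_comm (RS F g P) (RS (f N) g P), hclose N P]
    linarith [hN n hn, hN N le_rfl]
  obtain ⟨J, hJ⟩ := cauchySeq_tendsto_of_complete hcauchy
  refine ⟨J, fun ε hε => ?_, hJ⟩
  obtain ⟨n, hen, hIn⟩ := ((he.eventually (gt_mem_nhds (by positivity : 0 < ε / 3))).and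
    (Metric.tendsto_nhds.1 hJ (ε / 3) (by positivity))).exists
  obtain ⟨δ, hδ, hP⟩ := hfn n (ε / 3) (by positivity)
  refine ⟨δ, hδ, fun P hPf => ?_⟩
  have e₁ := hP P hPf
  have e₂ := hclose n P
  rw [Real.dist_eq] at hIn
  rw [abs_lt] at e₁ hIn ⊢
  rw [abs_le] at e₂
  constructor <;> linarith

/-- BV-convergence theorem for the Kurzweil–Stieltjes integral. -/
theorem stmt14 (a b : ℝ) (hab : a < b) (g : ℝ → ℝ) (M : ℝ)
    (hg : ∀ t ∈ Set.Icc a b, |g t| ≤ M)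
    (f : ℕ → ℝ → ℝ) (flim : ℝ → ℝ) (I : ℕ → ℝ)
    (hfn : ∀ n, HasKS (f n) g a b (I n))
    (hbv : ∀ n, BoundedVariationOn (fun t => f n t - flim t) (Set.Icc a b))
    (hconv : Filter.Tendsto
      (fun n => |f n a - flim a| + var (fun t => f n t - flim t) a b)
      Filter.atTop (nhds 0)) :
    ∃ J : ℝ, HasKS flim g a b J ∧ Filter.Tendsto I Filter.atTop (nhds J) := by
  refine exists_hasKS_tendsto_of_uniform hab hfn (by simpa using hconv.const_mul (4 * M))
    fun n P => ?_
  rw [← RS_sub]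
  exact abs_RS_le hg (hbv n) P
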